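/- Let A be a small preadditive category. The assignments I ↦ T_I := {T ∈ Mod A : T(α) = 0 for all α ∈ I(a,b) and all a,b ∈ Ob(A)} and T ↦ I_T, where I_T(a,b) := {r ∈ A(a,b) : T(r) = 0 for all T ∈ T}, are mutually inverse bijections between the set of idempotent ideals of A and the set of TTF triples (equivalently, TTF classes) in Mod A. -/

import Mathlib

/-
For an idempotent ideal `I`, the `I`-torsion part `t X = {x | X(α) x = 0 for α ∈ I}` of a module
is its largest submodule in `T_I`, and `I = I·I` makes `X / t X` free of `I`-torsion; this gives
the torsion pair `(T_I, T_I^⊥)`, and closure under submodules and products is immediate.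
Conversely, for a TTF class `T`, the ideal `I_T(-, b)` is the intersection of the subfunctors `s`
of `A(-, b)` with `A(-, b)/s ∈ T` (cyclic submodules of modules in `T` are such quotients), so
`A(-, b)/I_T(-, b)` embeds into a product of modules in `T` and lies in `T`. Hence an element of a
module in `T^⊥` killed by `I_T` is zero. This yields `T_{I_T} = T`; applied twice to a map from
`A(-, b)/I_T²(-, b)` into `T^⊥`, it shows `A(-, b)/I_T²(-, b) ∈ T`, whence `I_T ⊆ I_T²`.
Finally `I_{T_I} = I` because `A(-, b)/I(-, b) ∈ T_I`.
-/
open CategoryTheory CategoryTheory.Limits Opposite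
noncomputable section
universe u
variable (A : Type u) [SmallCategory A] [Preadditive A]

abbrev PMod := Aᵒᵖ ⥤ AddCommGrpCat.{u}

def Hrep (b : A) : PMod A where
  obj a := AddCommGrpCat.of (unop a ⟶ b)
  map f := AddCommGrpCat.ofHom (AddMonoidHom.mk' (fun g => f.unop ≫ g)
    (fun g h => Preadditive.comp_add _ _ _ _ _ _))
  map_id a := by ext g; simp
  map_comp f g := by
    ext h
    show (f ≫ g).unop ≫ h = g.unop ≫ f.unop ≫ h
    simp

def toH {a b : A} (γ : a ⟶ b) : ((Hrep A b).obj (op a)) := γ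

def Hmap {b b' : A} (r : b ⟶ b') : Hrep A b ⟶ Hrep A b' where
  app a := AddCommGrpCat.ofHom (AddMonoidHom.mk' (fun g => g ≫ r)
    (fun g h => Preadditive.add_comp _ _ _ _ _ _))
  naturality a a' f := by
    ext g
    show (f.unop ≫ g) ≫ r = f.unop ≫ g ≫ r
    exact Category.assoc (obj := A) _ _ _

def inSub {M : PMod A} (R : Subobject M) {a : A} (x : M.obj (op a)) : Prop :=
  ∃ y, R.arrow.app (op a) y = x


/-- A two-sided ideal of the preadditive category `A`. -/
structure CatIdeal : Type u where
  carrier : ∀ a b : A, AddSubgroup (a ⟶ b)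
  comp_mem_left : ∀ {a b c : A} (f : a ⟶ b) (g : b ⟶ c), f ∈ carrier a b → f ≫ g ∈ carrier a c
  comp_mem_right : ∀ {a b c : A} (f : a ⟶ b) (g : b ⟶ c), g ∈ carrier b c → f ≫ g ∈ carrier a c

/-- The product of two ideals: finite sums of composites. -/
def idealMul (I J : CatIdeal A) : ∀ a b : A, AddSubgroup (a ⟶ b) := fun a b =>
  AddSubgroup.closure
    {u | ∃ (c : A) (ψ : a ⟶ c) (φ : c ⟶ b), ψ ∈ J.carrier a c ∧ φ ∈ I.carrier c b ∧ u = ψ ≫ φ}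

def CatIdeal.IsIdempotent (I : CatIdeal A) : Prop :=
  ∀ a b : A, idealMul A I I a b = I.carrier a b

def IsTorsionPair (T F : Set (PMod A)) : Prop :=
  T = {X | X.Additive ∧ ∀ Y ∈ F, ∀ f : X ⟶ Y, f = 0} ∧
  F = {X | X.Additive ∧ ∀ Y ∈ T, ∀ f : Y ⟶ X, f = 0} ∧
  ∀ X : PMod A, X.Additive →
    ∃ (Z : PMod A) (p : X ⟶ Z), Z ∈ F ∧ Epi p ∧ kernel p ∈ T

def IsHereditaryTorsionClass (T : Set (PMod A)) : Prop :=
  (∃ F, IsTorsionPair A T F) ∧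
  ∀ (S X : PMod A) (f : S ⟶ X), Mono f → X ∈ T → S ∈ T

/-- A TTF class: a hereditary torsion class closed under products. -/
def IsTTFClass (T : Set (PMod A)) : Prop :=
  IsHereditaryTorsionClass A T ∧
  ∀ (ι : Type u) (g : ι → PMod A), (∀ i, g i ∈ T) → (∏ᶜ g) ∈ T

def TI (I : CatIdeal A) : Set (PMod A) :=
  {M | M.Additive ∧ ∀ (a b : A) (α : a ⟶ b), α ∈ I.carrier a b → M.map α.op = 0}

@[ext]
structure AddSubfunctor {C : Type u} [SmallCategory C] (X : PMod C) : Type u where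
  obj : ∀ c : C, AddSubgroup (X.obj (op c))
  map_mem : ∀ {c d : C} (φ : c ⟶ d) {x : X.obj (op d)}, x ∈ obj d → X.map φ.op x ∈ obj c

namespace AddSubfunctor

variable {C : Type u} [SmallCategory C] {X Y : PMod C} (s : AddSubfunctor X)

def quotient : PMod C where
  obj c := AddCommGrpCat.of (X.obj c ⧸ s.obj c.unop)
  map φ := AddCommGrpCat.ofHom <|
    QuotientAddGroup.map _ _ (X.map φ).hom fun _ hx => s.map_mem φ.unop hx
  map_id c := by ext; simp
  map_comp f g := by ext; simp; rfl

def π : X ⟶ s.quotient where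
  app c := AddCommGrpCat.ofHom (QuotientAddGroup.mk' (s.obj c.unop))

lemma π_app_surjective (c : Cᵒᵖ) : Function.Surjective (s.π.app c) :=
  QuotientAddGroup.mk'_surjective _

instance : Epi s.π :=
  have (c : Cᵒᵖ) : Epi (s.π.app c) :=
    (AddCommGrpCat.epi_iff_surjective _).2 (s.π_app_surjective c)
  NatTrans.epi_of_epi_app _

lemma π_app_eq_zero_iff {c : C} (x : X.obj (op c)) : s.π.app (op c) x = 0 ↔ x ∈ s.obj c :=
  QuotientAddGroup.eq_zero_iff x

def lift (g : X ⟶ Y) (hg : ∀ c, ∀ x ∈ s.obj c, g.app (op c) x = 0) : s.quotient ⟶ Y where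
  app c := AddCommGrpCat.ofHom <|
    QuotientAddGroup.lift _ (g.app c).hom fun x hx => hg c.unop x hx
  naturality c d φ := by
    ext q
    induction q using QuotientAddGroup.induction_on
    exact NatTrans.naturality_apply g φ _

lemma mono_lift (g : X ⟶ Y) (hg : ∀ c, ∀ x ∈ s.obj c, g.app (op c) x = 0)
    (hker : ∀ c (x : X.obj (op c)), g.app (op c) x = 0 → x ∈ s.obj c) : Mono (s.lift g hg) := by
  have (c : Cᵒᵖ) : Mono ((s.lift g hg).app c) := by
    refine (AddCommGrpCat.mono_iff_injective _).2 ((injective_iff_map_eq_zero _).2 fun q hq => ?_)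
    obtain ⟨x, rfl⟩ := s.π_app_surjective c q
    exact (s.π_app_eq_zero_iff x).2 (hker c.unop x hq)
  exact NatTrans.mono_of_mono_app _

def ker (g : X ⟶ Y) : AddSubfunctor X where
  obj c := (g.app (op c)).hom.ker
  map_mem {_ _} φ {x} hx := by
    simp only [AddMonoidHom.mem_ker] at hx ⊢
    rw [NatTrans.naturality_apply, hx, map_zero]

lemma mem_ker (g : X ⟶ Y) {c : C} (x : X.obj (op c)) : x ∈ (ker g).obj c ↔ g.app (op c) x = 0 :=
  Iff.rfl

end AddSubfunctor

section
variable {C : Type u} [SmallCategory C]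

lemma map_eq_zero_of_mono {S X : PMod C} (f : S ⟶ X) [Mono f] {a b : Cᵒᵖ} (φ : a ⟶ b)
    (h : X.map φ = 0) : S.map φ = 0 := by
  rw [← cancel_mono (f.app b), f.naturality, h, comp_zero, zero_comp]

lemma pi_app_ext {ι : Type u} (G : ι → PMod C) {a : Cᵒᵖ} (x y : (∏ᶜ G).obj a)
    (h : ∀ i, (Pi.π G i).app a x = (Pi.π G i).app a y) : x = y :=
  Concrete.isLimit_ext _ (isLimitOfPreserves ((evaluation Cᵒᵖ AddCommGrpCat).obj a)
    (limit.isLimit (Discrete.functor G))) x y fun ⟨i⟩ => h i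

lemma pi_map_eq_zero {ι : Type u} (G : ι → PMod C) {a b : Cᵒᵖ} (φ : a ⟶ b)
    (h : ∀ i, (G i).map φ = 0) : (∏ᶜ G).map φ = 0 := by
  ext x
  refine pi_app_ext G _ _ fun i => ?_
  rw [← ConcreteCategory.comp_apply, NatTrans.naturality, h i]
  simp

end

variable {A}

lemma AddSubfunctor.quotient_additive {X : PMod A} (s : AddSubfunctor X) [X.Additive] :
    s.quotient.Additive where
  map_add {_ _ f g} := by
    ext q
    induction q using QuotientAddGroup.induction_on
    simp [quotient]
    rfl

lemma additive_of_mono {S X : PMod A} (f : S ⟶ X) [Mono f] [X.Additive] : S.Additive where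
  map_add {_ b u v} := by
    rw [← cancel_mono (f.app b), f.naturality, X.map_add, Preadditive.add_comp,
      Preadditive.comp_add, ← f.naturality, ← f.naturality]

lemma pi_additive {ι : Type u} (G : ι → PMod A) [∀ i, (G i).Additive] : (∏ᶜ G).Additive where
  map_add {_ _ f g} := by
    ext x
    refine pi_app_ext G _ _ fun i => ?_
    simp only [← ConcreteCategory.comp_apply, NatTrans.naturality, Functor.map_add,
      Preadditive.add_comp, Preadditive.comp_add]

instance (b : A) : (Hrep A b).Additive where
  map_add {_ _ f g} := by ext γ; exact Preadditive.add_comp _ _ _ f.unop g.unop γ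

def homOfElement (M : PMod A) [M.Additive] {b : A} (y : M.obj (op b)) : Hrep A b ⟶ M where
  app a := AddCommGrpCat.ofHom
    { toFun := fun γ => M.map (γ : a.unop ⟶ b).op y
      map_zero' := by rw [op_zero, M.map_zero]; rfl
      map_add' := fun γ δ => by rw [op_add, M.map_add]; rfl }
  naturality a a' f := by
    ext (γ : a.unop ⟶ b)
    change M.map (f.unop ≫ γ).op y = M.map f (M.map γ.op y)
    rw [op_comp, M.map_comp]
    rfl

lemma AddSubfunctor.mem_of_quotient_map_eq_zero {a b : A} (s : AddSubfunctor (Hrep A b))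
    {r : a ⟶ b} (h : s.quotient.map r.op = 0) : toH A r ∈ s.obj a := by
  have h1 := NatTrans.naturality_apply s.π r.op (toH A (𝟙 b))
  have h2 : (Hrep A b).map r.op (toH A (𝟙 b)) = toH A r := Category.comp_id r
  rw [h, h2] at h1
  rw [← s.π_app_eq_zero_iff, h1]
  rfl

namespace CatIdeal

@[ext]
lemma ext {I J : CatIdeal A} (h : ∀ a b, I.carrier a b = J.carrier a b) : I = J := by
  cases I; cases J
  congr
  funext a b
  exact h a b

variable (I J : CatIdeal A)

lemma idealMul_comp_mem_left {a b c : A} (f : a ⟶ b) (g : b ⟶ c) (hf : f ∈ idealMul A I J a b) :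
    f ≫ g ∈ idealMul A I J a c := by
  induction hf using AddSubgroup.closure_induction with
  | mem u hu =>
    obtain ⟨d, ψ, φ, hψ, hφ, rfl⟩ := hu
    exact AddSubgroup.subset_closure ⟨d, ψ, φ ≫ g, hψ, I.comp_mem_left φ g hφ, by simp⟩
  | zero => simp
  | add u v _ _ hu hv => simpa using add_mem hu hv
  | neg u _ hu => simpa using neg_mem hu

lemma idealMul_comp_mem_right {a b c : A} (f : a ⟶ b) (g : b ⟶ c)
    (hg : g ∈ idealMul A I J b c) : f ≫ g ∈ idealMul A I J a c := by
  induction hg using AddSubgroup.closure_induction with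
  | mem u hu =>
    obtain ⟨d, ψ, φ, hψ, hφ, rfl⟩ := hu
    exact AddSubgroup.subset_closure ⟨d, f ≫ ψ, φ, J.comp_mem_right f ψ hψ, hφ, by simp⟩
  | zero => simp
  | add u v _ _ hu hv => simpa using add_mem hu hv
  | neg u _ hu => simpa using neg_mem hu

def mul : CatIdeal A where
  carrier := idealMul A I J
  comp_mem_left := idealMul_comp_mem_left I J
  comp_mem_right := idealMul_comp_mem_right I J

lemma mul_le (a b : A) : (I.mul J).carrier a b ≤ I.carrier a b :=
  (AddSubgroup.closure_le _).2 fun _ ⟨_, ψ, _, _, hφ, hu⟩ => hu ▸ I.comp_mem_right ψ _ hφ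

lemma comp_mem_mul {a b c : A} {ψ : a ⟶ b} {φ : b ⟶ c} (hψ : ψ ∈ J.carrier a b)
    (hφ : φ ∈ I.carrier b c) : ψ ≫ φ ∈ (I.mul J).carrier a c :=
  AddSubgroup.subset_closure ⟨b, ψ, φ, hψ, hφ, rfl⟩

def subfunctor (b : A) : AddSubfunctor (Hrep A b) where
  obj a := I.carrier a b
  map_mem {_ _} φ _ hx := I.comp_mem_right φ _ hx

lemma quotient_subfunctor_mem_TI (b : A) : (I.subfunctor b).quotient ∈ TI A I := by
  refine ⟨AddSubfunctor.quotient_additive _, fun a c α hα => ?_⟩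
  ext q
  obtain ⟨γ, rfl⟩ := (I.subfunctor b).π_app_surjective _ q
  rw [← NatTrans.naturality_apply]
  exact ((I.subfunctor b).π_app_eq_zero_iff _).2 (I.comp_mem_left α γ hα)

def torsion (X : PMod A) : AddSubfunctor X where
  obj b := ⨅ (a : A) (α : a ⟶ b) (_ : α ∈ I.carrier a b), (X.map α.op).hom.ker
  map_mem {_ _} φ x hx := by
    simp only [AddSubgroup.mem_iInf, AddMonoidHom.mem_ker] at hx ⊢
    intro a α hα
    rw [← ConcreteCategory.comp_apply, ← X.map_comp, ← op_comp]
    exact hx a (α ≫ φ) (I.comp_mem_left α φ hα)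

lemma mem_torsion {X : PMod A} {b : A} (x : X.obj (op b)) :
    x ∈ (I.torsion X).obj b ↔ ∀ a (α : a ⟶ b), α ∈ I.carrier a b → X.map α.op x = 0 := by
  simp [torsion]

end CatIdeal

def rightPerp (T : Set (PMod A)) : Set (PMod A) :=
  {X | X.Additive ∧ ∀ Y ∈ T, ∀ f : Y ⟶ X, f = 0}

namespace CatIdeal

variable {I : CatIdeal A}

lemma torsion_quotient_eq_zero (hI : I.IsIdempotent) {X : PMod A} [X.Additive] {b : A}
    (z : (I.torsion X).quotient.obj (op b))
    (hz : ∀ a (α : a ⟶ b), α ∈ I.carrier a b → (I.torsion X).quotient.map α.op z = 0) :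
    z = 0 := by
  obtain ⟨x, rfl⟩ := (I.torsion X).π_app_surjective _ z
  rw [AddSubfunctor.π_app_eq_zero_iff, mem_torsion]
  intro a α hα
  rw [← hI a b] at hα
  refine (AddSubgroup.closure_le ((AddSubfunctor.ker (homOfElement X x)).obj a)).2 ?_ hα
  rintro _ ⟨c, ψ, φ, hψ, hφ, rfl⟩
  have hφx : X.map φ.op x ∈ (I.torsion X).obj c := by
    rw [← AddSubfunctor.π_app_eq_zero_iff, NatTrans.naturality_apply]
    exact hz c φ hφ
  change X.map (ψ ≫ φ).op x = 0
  rw [op_comp, X.map_comp, ConcreteCategory.comp_apply]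
  exact (I.mem_torsion _).1 hφx a ψ hψ

lemma torsion_quotient_mem_rightPerp (hI : I.IsIdempotent) (X : PMod A) [X.Additive] :
    (I.torsion X).quotient ∈ rightPerp (TI A I) := by
  refine ⟨AddSubfunctor.quotient_additive _, fun Y hY f => ?_⟩
  ext c y
  refine torsion_quotient_eq_zero hI _ fun a α hα => ?_
  rw [← NatTrans.naturality_apply, hY.2 a _ α hα]
  simp

lemma mem_TI_of_mono {S X : PMod A} (f : S ⟶ X) [Mono f] (hX : X ∈ TI A I) : S ∈ TI A I :=
  have := hX.1
  ⟨additive_of_mono f, fun a b α hα => map_eq_zero_of_mono f α.op (hX.2 a b α hα)⟩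

lemma pi_mem_TI {ι : Type u} (G : ι → PMod A) (hG : ∀ i, G i ∈ TI A I) : ∏ᶜ G ∈ TI A I :=
  have := fun i => (hG i).1
  ⟨pi_additive G, fun a b α hα => pi_map_eq_zero G α.op fun i => (hG i).2 a b α hα⟩

lemma mem_TI_of_forall_hom_eq_zero (hI : I.IsIdempotent) {X : PMod A} (hX : X.Additive)
    (h : ∀ Y ∈ rightPerp (TI A I), ∀ f : X ⟶ Y, f = 0) : X ∈ TI A I := by
  refine ⟨hX, fun a b α hα => ?_⟩
  ext x
  have hx : x ∈ (I.torsion X).obj b := by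
    rw [← AddSubfunctor.π_app_eq_zero_iff,
      h _ (torsion_quotient_mem_rightPerp hI X) (I.torsion X).π]
    rfl
  exact (I.mem_torsion x).1 hx a α hα

lemma kernel_torsion_π_mem_TI (X : PMod A) [X.Additive] : kernel (I.torsion X).π ∈ TI A I := by
  set p := (I.torsion X).π
  refine ⟨additive_of_mono (kernel.ι p), fun a b α hα => ?_⟩
  rw [← cancel_mono ((kernel.ι p).app (op a)), (kernel.ι p).naturality, zero_comp]
  ext x
  have hx : (kernel.ι p).app (op b) x ∈ (I.torsion X).obj b := by
    rw [← AddSubfunctor.π_app_eq_zero_iff, ← ConcreteCategory.comp_apply, ← NatTrans.comp_app,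
      kernel.condition]
    rfl
  exact (I.mem_torsion _).1 hx a α hα

lemma isTorsionPair_TI (hI : I.IsIdempotent) : IsTorsionPair A (TI A I) (rightPerp (TI A I)) := by
  refine ⟨?_, rfl, fun X hX => ?_⟩
  · ext X
    exact ⟨fun hX => ⟨hX.1, fun Y hY f => hY.2 X hX f⟩,
      fun ⟨hX, h⟩ => mem_TI_of_forall_hom_eq_zero hI hX h⟩
  · have := hX
    exact ⟨_, (I.torsion X).π, torsion_quotient_mem_rightPerp hI X, inferInstance,
      kernel_torsion_π_mem_TI X⟩

lemma isTTFClass_TI (hI : I.IsIdempotent) : IsTTFClass A (TI A I) :=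
  ⟨⟨⟨_, isTorsionPair_TI hI⟩, fun _ _ f _ hX => mem_TI_of_mono f hX⟩,
    fun _ G hG => pi_mem_TI G hG⟩

end CatIdeal

def annIdeal (T : Set (PMod A)) (hT : ∀ M ∈ T, M.Additive) : CatIdeal A where
  carrier a b :=
    { carrier := {r | ∀ M ∈ T, M.map r.op = 0}
      zero_mem' := fun M hM => by
        have := hT M hM
        rw [op_zero, M.map_zero]
      add_mem' := fun {r s} hr hs M hM => by
        have := hT M hM
        rw [op_add, M.map_add, hr M hM, hs M hM, add_zero]
      neg_mem' := fun {r} hr M hM => by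
        have := hT M hM
        rw [op_neg, M.map_neg, hr M hM, neg_zero] }
  comp_mem_left f g hf M hM := by rw [op_comp, M.map_comp, hf M hM, comp_zero]
  comp_mem_right f g hg M hM := by rw [op_comp, M.map_comp, hg M hM, zero_comp]

lemma annIdeal_TI (I : CatIdeal A) : annIdeal (TI A I) (fun _ hM => hM.1) = I := by
  ext a b r
  exact ⟨fun hr => (I.subfunctor b).mem_of_quotient_map_eq_zero
    (hr _ (I.quotient_subfunctor_mem_TI b)), fun hr _ hM => hM.2 a b r hr⟩

namespace IsTTFClass

variable {T : Set (PMod A)}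

lemma additive (hT : IsTTFClass A T) : ∀ M ∈ T, M.Additive := by
  obtain ⟨⟨⟨F, hTF, -⟩, -⟩, -⟩ := hT
  intro M hM
  rw [hTF] at hM
  exact hM.1

lemma mem_of_forall_hom_eq_zero (hT : IsTTFClass A T) {X : PMod A} (hX : X.Additive)
    (h : ∀ Y ∈ rightPerp T, ∀ f : X ⟶ Y, f = 0) : X ∈ T := by
  obtain ⟨⟨⟨F, hTF, hFT, -⟩, -⟩, -⟩ := hT
  rw [hTF]
  exact ⟨hX, fun Y hY => h Y (by rwa [hFT] at hY)⟩

lemma mem_of_mono (hT : IsTTFClass A T) {S X : PMod A} (f : S ⟶ X) [Mono f] (hX : X ∈ T) :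
    S ∈ T :=
  hT.1.2 S X f inferInstance hX

lemma pi_mem (hT : IsTTFClass A T) {ι : Type u} (G : ι → PMod A) (hG : ∀ i, G i ∈ T) :
    ∏ᶜ G ∈ T :=
  hT.2 ι G hG

lemma quotient_ker_mem (hT : IsTTFClass A T) {X Y : PMod A} (g : X ⟶ Y) (hY : Y ∈ T) :
    (AddSubfunctor.ker g).quotient ∈ T :=
  have := (AddSubfunctor.ker g).mono_lift g (fun _ _ hx => hx) (fun _ _ hx => hx)
  hT.mem_of_mono ((AddSubfunctor.ker g).lift g fun _ _ hx => hx) hY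

lemma mem_annIdeal_iff (hT : IsTTFClass A T) {a b : A} (r : a ⟶ b) :
    r ∈ (annIdeal T hT.additive).carrier a b ↔
      ∀ s : AddSubfunctor (Hrep A b), s.quotient ∈ T → toH A r ∈ s.obj a := by
  refine ⟨fun hr s hs => s.mem_of_quotient_map_eq_zero (hr _ hs), fun h M hM => ?_⟩
  have := hT.additive M hM
  ext y
  exact h _ (hT.quotient_ker_mem (homOfElement M y) hM)

lemma quotient_annIdeal_subfunctor_mem (hT : IsTTFClass A T) (b : A) :
    ((annIdeal T hT.additive).subfunctor b).quotient ∈ T := by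
  -- The product runs over subfunctors of `A(-, b)`, not over modules in `T`, to stay small.
  let G : {s : AddSubfunctor (Hrep A b) // s.quotient ∈ T} → PMod A := fun s => s.1.quotient
  have hker : (annIdeal T hT.additive).subfunctor b =
      AddSubfunctor.ker (Pi.lift fun s => s.1.π : Hrep A b ⟶ ∏ᶜ G) := by
    ext a r
    refine (hT.mem_annIdeal_iff r).trans
      ⟨fun h => (AddSubfunctor.mem_ker _ _).2 ?_, fun h s hs => ?_⟩
    · refine pi_app_ext _ _ _ fun s => ?_
      rw [← ConcreteCategory.comp_apply, ← NatTrans.comp_app, Pi.lift_π, map_zero]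
      exact (s.1.π_app_eq_zero_iff _).2 (h s.1 s.2)
    · have := congrArg ((Pi.π G ⟨s, hs⟩).app (op a)) ((AddSubfunctor.mem_ker _ _).1 h)
      rw [← ConcreteCategory.comp_apply, ← NatTrans.comp_app, Pi.lift_π, map_zero] at this
      exact (s.π_app_eq_zero_iff _).1 this
  rw [hker]
  exact hT.quotient_ker_mem _ (hT.pi_mem G fun s => s.2)

lemma eq_zero_of_annIdeal_map_eq_zero (hT : IsTTFClass A T) {Y : PMod A} (hY : Y ∈ rightPerp T)
    {b : A} (y : Y.obj (op b))
    (hy : ∀ a (α : a ⟶ b), α ∈ (annIdeal T hT.additive).carrier a b → Y.map α.op y = 0) :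
    y = 0 := by
  have := hY.1
  set s := (annIdeal T hT.additive).subfunctor b
  have hg : s.lift (homOfElement Y y) hy = 0 := hY.2 _ (hT.quotient_annIdeal_subfunctor_mem b) _
  calc y = (s.lift (homOfElement Y y) hy).app (op b) (s.π.app (op b) (toH A (𝟙 b))) := by
        change y = Y.map (𝟙 (op b)) y
        rw [Y.map_id]
        rfl
    _ = 0 := by rw [hg]; rfl

lemma TI_annIdeal (hT : IsTTFClass A T) : TI A (annIdeal T hT.additive) = T := by
  ext M
  refine ⟨fun hM => hT.mem_of_forall_hom_eq_zero hM.1 fun Y hY f => ?_,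
    fun hM => ⟨hT.additive M hM, fun a b α hα => hα M hM⟩⟩
  ext c x
  refine hT.eq_zero_of_annIdeal_map_eq_zero hY _ fun a α hα => ?_
  rw [← NatTrans.naturality_apply, hM.2 _ _ α hα]
  simp

lemma annIdeal_isIdempotent (hT : IsTTFClass A T) : (annIdeal T hT.additive).IsIdempotent := by
  set I := annIdeal T hT.additive
  intro a b
  refine le_antisymm (I.mul_le I a b) fun r hr => ?_
  suffices hQ : ((I.mul I).subfunctor b).quotient ∈ T from
    ((I.mul I).subfunctor b).mem_of_quotient_map_eq_zero (hr _ hQ)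
  refine hT.mem_of_forall_hom_eq_zero (AddSubfunctor.quotient_additive _) fun Y hY f => ?_
  set π := ((I.mul I).subfunctor b).π
  have hnat {c d : A} (α : c ⟶ d) (γ : d ⟶ b) : f.app (op c) (π.app (op c) (toH A (α ≫ γ))) =
      Y.map α.op (f.app (op d) (π.app (op d) (toH A γ))) := by
    rw [← NatTrans.naturality_apply, ← NatTrans.naturality_apply]
    rfl
  have hI (c : A) (γ : c ⟶ b) (hγ : γ ∈ I.carrier c b) :
      f.app (op c) (π.app (op c) (toH A γ)) = 0 :=
    hT.eq_zero_of_annIdeal_map_eq_zero hY _ fun d α hα => by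
      rw [← hnat, (AddSubfunctor.π_app_eq_zero_iff _ _).2 (I.comp_mem_mul I hα hγ), map_zero]
  have hall (c : A) (γ : c ⟶ b) : f.app (op c) (π.app (op c) (toH A γ)) = 0 :=
    hT.eq_zero_of_annIdeal_map_eq_zero hY _ fun d α hα => by
      rw [← hnat, hI d _ (I.comp_mem_left α γ hα)]
  rw [← cancel_epi π, comp_zero]
  ext c γ
  exact hall c.unop γ

end IsTTFClass

theorem statement1 :
    ∃ e : {I : CatIdeal A // I.IsIdempotent} ≃ {T : Set (PMod A) // IsTTFClass A T},
      (∀ I : {I : CatIdeal A // I.IsIdempotent}, (e I).1 = TI A I.1) ∧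
      (∀ (T : {T : Set (PMod A) // IsTTFClass A T}) (a b : A),
        ((e.symm T).1.carrier a b : Set (a ⟶ b)) =
          {r : a ⟶ b | ∀ M ∈ T.1, M.map r.op = 0}) :=
  ⟨{ toFun := fun I => ⟨TI A I.1, CatIdeal.isTTFClass_TI I.2⟩
     invFun := fun T =>
       ⟨annIdeal T.1 (IsTTFClass.additive T.2), IsTTFClass.annIdeal_isIdempotent T.2⟩
     left_inv := fun I => Subtype.ext (annIdeal_TI I.1)
     right_inv := fun T => Subtype.ext (IsTTFClass.TI_annIdeal T.2) },
    fun _ => rfl, fun _ _ _ => rfl⟩
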